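/- Let q be a power of a prime p > 3 with p ≡ 1 (mod 3), and let E₁ and E₂ be elliptic curves over 𝔽_q both with j-invariant 0. Then #E₁(𝔽_q) = #E₂(𝔽_q) if and only if the groups E₁(𝔽_q) and E₂(𝔽_q) are isomorphic as abelian groups. -/

import Mathlib

/-!
Let `q = p ^ r = 6m + 1`. Every curve over `𝔽_q` with `j = 0` becomes `y² = x³ + B`, `B ≠ 0`,
after a change of variables. Counting square roots by Euler's criterion,
`#E_B ≡ 1 - C(3m, 2m) B^m (mod p)`, and `p ∤ C(3m, 2m)` by Lucas' theorem: with `p = 6μ + 1`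
the base-`p` digits of `3m` and `2m` are all `3μ` and `2μ`. So equal point counts force
`B₁^m = B₂^m`, i.e. `B₂ / B₁ = v⁶` in the cyclic group `𝔽_q^×` of order `6m`, and then
`(x, y) ↦ (v²x, v³y)` is an isomorphism of the curves, hence of their groups of points.
-/

open WeierstrassCurve WeierstrassCurve.Affine Finset

lemma Nat.Prime.not_dvd_choose_add_mul {p a b n k : ℕ} (hp : p.Prime) (hap : a < p) (hba : b ≤ a)
    (h : ¬p ∣ n.choose k) : ¬p ∣ (a + n * p).choose (b + k * p) := by
  have : Fact p.Prime := ⟨hp⟩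
  have hlucas := Choose.choose_modEq_choose_mod_mul_choose_div_nat (p := p)
    (n := a + n * p) (k := b + k * p)
  rw [Nat.add_mul_mod_self_right, Nat.add_mul_mod_self_right, Nat.mod_eq_of_lt hap,
    Nat.mod_eq_of_lt (hba.trans_lt hap), Nat.add_mul_div_right _ _ hp.pos,
    Nat.add_mul_div_right _ _ hp.pos, Nat.div_eq_of_lt hap, Nat.div_eq_of_lt (hba.trans_lt hap),
    zero_add, zero_add] at hlucas
  rw [hlucas.dvd_iff dvd_rfl, hp.dvd_mul, not_or]
  exact ⟨hp.coprime_iff_not_dvd.mp (hp.coprime_choose_of_lt hap hba), h⟩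

lemma Nat.Prime.not_dvd_choose_three_mul_two_mul {p r m : ℕ} (hp : p.Prime) (hp6 : p % 6 = 1)
    (hm : 6 * m + 1 = p ^ r) : ¬p ∣ (3 * m).choose (2 * m) := by
  induction r generalizing m with
  | zero =>
    obtain rfl : m = 0 := by simpa using hm
    simpa using hp.ne_one
  | succ r ih =>
    obtain ⟨μ, rfl⟩ : ∃ μ, p = 6 * μ + 1 := ⟨p / 6, by omega⟩
    obtain ⟨m', hm'⟩ : ∃ m', 6 * m' + 1 = (6 * μ + 1) ^ r := ⟨(6 * μ + 1) ^ r / 6, by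
      have : (6 * μ + 1) ^ r % 6 = 1 := by rw [Nat.pow_mod]; simp [Nat.add_mod]
      omega⟩
    obtain rfl : m = μ + m' * (6 * μ + 1) := by
      rw [pow_succ, ← hm'] at hm
      nlinarith
    rw [show 3 * (μ + m' * (6 * μ + 1)) = 3 * μ + 3 * m' * (6 * μ + 1) by ring,
      show 2 * (μ + m' * (6 * μ + 1)) = 2 * μ + 2 * m' * (6 * μ + 1) by ring]
    exact hp.not_dvd_choose_add_mul (by omega) (by omega) (ih hm')

lemma IsCyclic.exists_pow_eq_of_pow_eq_one {G : Type*} [Group G] [IsCyclic G] [Finite G]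
    {d m : ℕ} (hG : Nat.card G = d * m) {a : G} (ha : a ^ m = 1) : ∃ b : G, b ^ d = a := by
  obtain ⟨g, hg⟩ := IsCyclic.exists_generator (α := G)
  obtain ⟨k, rfl⟩ : a ∈ Submonoid.powers g := mem_powers_iff_mem_zpowers.mpr (hg a)
  have hm : m ≠ 0 := by
    rintro rfl
    exact Nat.card_pos.ne' (by rw [hG, mul_zero])
  have hdvd : d * m ∣ k * m := by
    rw [← hG, ← orderOf_eq_card_of_forall_mem_zpowers hg, orderOf_dvd_iff_pow_eq_one, pow_mul, ha]
  obtain ⟨c, rfl⟩ := Nat.dvd_of_mul_dvd_mul_right (Nat.pos_of_ne_zero hm) hdvd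
  exact ⟨g ^ c, by rw [← pow_mul, mul_comm]⟩

namespace FiniteField

variable {F : Type*} [Field F] [Fintype F]

lemma sum_pow_eq_ite {i : ℕ} (hi : i ≠ 0) :
    ∑ x : F, x ^ i = if Fintype.card F - 1 ∣ i then -1 else 0 := by
  classical
  rw [← sum_pow_units F i]
  refine (Fintype.sum_of_injective _ Units.val_injective _ _ (fun x hx ↦ ?_) fun _ ↦ rfl).symm
  rw [Set.mem_range, not_exists] at hx
  obtain rfl : x = 0 := by_contra fun hx0 ↦ hx (Units.mk0 x hx0) rfl
  exact zero_pow hi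

lemma cast_card_sqrts (hF : ringChar F ≠ 2) (a : F) :
    (Nat.card {y : F // y ^ 2 = a} : F) = 1 + a ^ (Fintype.card F / 2) := by
  classical
  have h := quadraticChar_card_sqrts hF a
  rw [Set.toFinset_card] at h
  rw [Nat.card_eq_fintype_card, ← quadraticChar_eq_pow_of_char_ne_two' hF, add_comm]
  exact_mod_cast congrArg (Int.cast : ℤ → F) h

lemma sum_cube_add_pow {m : ℕ} (hq : Fintype.card F = 6 * m + 1) (B : F) :
    ∑ x : F, (x ^ 3 + B) ^ (3 * m) = -((3 * m).choose (2 * m) : F) * B ^ m := by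
  have hm : m ≠ 0 := by
    have := Fintype.one_lt_card (α := F)
    omega
  have hsum : ∀ k ∈ range (3 * m + 1), ∑ x : F, x ^ (3 * k) = if k = 2 * m then -1 else 0 := by
    intro k hk
    rcases Nat.eq_zero_or_pos k with rfl | hk0
    · simp [hm]
    rw [sum_pow_eq_ite (by positivity), hq, Nat.add_sub_cancel]
    have hdvd : 6 * m ∣ 3 * k ↔ k = 2 * m := by
      rw [show 6 * m = 3 * (2 * m) by ring, Nat.mul_dvd_mul_iff_left three_pos]
      refine ⟨fun h ↦ Nat.eq_of_dvd_of_lt_two_mul hk0.ne' h ?_, fun h ↦ h ▸ dvd_rfl⟩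
      rw [mem_range] at hk
      omega
    simp only [hdvd]
  calc ∑ x : F, (x ^ 3 + B) ^ (3 * m)
      = ∑ k ∈ range (3 * m + 1), ((3 * m).choose k * B ^ (3 * m - k)) * ∑ x : F, x ^ (3 * k) := by
        simp_rw [add_pow, Finset.mul_sum, ← pow_mul]
        rw [Finset.sum_comm]
        refine sum_congr rfl fun k _ ↦ sum_congr rfl fun x _ ↦ by ring
    _ = -((3 * m).choose (2 * m) : F) * B ^ m := by
        rw [sum_congr rfl fun k hk ↦ by rw [hsum k hk]]
        simp only [mul_ite, mul_neg, mul_one, mul_zero]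
        rw [sum_ite_eq' _ _ _, if_pos (mem_range.mpr (by omega)), show 3 * m - 2 * m = m by omega]
        ring

lemma charP_of_card_eq_pow {p r : ℕ} (hp : p.Prime) (hF : Fintype.card F = p ^ r) : CharP F p := by
  obtain ⟨p', hchar, n, hp', hcard⟩ := FiniteField.card' F
  have hdvd : p' ∣ p ^ r := hF ▸ hcard ▸ dvd_pow_self p' n.ne_zero
  rwa [(Nat.prime_dvd_prime_iff_eq hp' hp).mp (hp'.dvd_of_dvd_pow hdvd)] at hchar

end FiniteField

namespace WeierstrassCurve.VariableChange

variable {F : Type*} [Field F] (C : VariableChange F) {W : WeierstrassCurve F}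

/-- `C • W` is `W` after the substitution `x = u²x' + r`, `y = u³y' + u²sx' + t`;
`mapX` and `mapY` return `x'` and `y'`. -/
def mapX (x : F) : F := (C.u : F)⁻¹ ^ 2 * (x - C.r)

def mapY (x y : F) : F := (C.u : F)⁻¹ ^ 3 * (y - C.s * (x - C.r) - C.t)

lemma inv_u_ne_zero : (C.u : F)⁻¹ ≠ 0 := inv_ne_zero C.u.ne_zero

lemma mapX_injective : Function.Injective C.mapX := fun _ _ h ↦
  sub_left_injective (mul_left_cancel₀ (pow_ne_zero 2 C.inv_u_ne_zero) h)

lemma mapY_injective (x : F) : Function.Injective (C.mapY x) := fun _ _ h ↦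
  sub_left_injective (sub_left_injective (mul_left_cancel₀ (pow_ne_zero 3 C.inv_u_ne_zero) h))

lemma exists_mapX_mapY_eq (x' y' : F) : ∃ x y, C.mapX x = x' ∧ C.mapY x y = y' := by
  refine ⟨C.u ^ 2 * x' + C.r, C.u ^ 3 * y' + C.s * C.u ^ 2 * x' + C.t, ?_, ?_⟩ <;>
  · simp only [mapX, mapY]
    field_simp
    ring

lemma equation_mapX_mapY_iff {x y : F} :
    (C • W).toAffine.Equation (C.mapX x) (C.mapY x y) ↔ W.toAffine.Equation x y := by
  have key : (C • W).toAffine.polynomial.evalEval (C.mapX x) (C.mapY x y) =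
      (C.u : F)⁻¹ ^ 6 * W.toAffine.polynomial.evalEval x y := by
    simp only [evalEval_polynomial, mapX, mapY, variableChange_a₁, variableChange_a₂,
      variableChange_a₃, variableChange_a₄, variableChange_a₆,
      Units.val_inv_eq_inv_val]
    ring
  rw [Equation, Equation, key, mul_eq_zero, or_iff_right (pow_ne_zero 6 C.inv_u_ne_zero)]

lemma nonsingular_mapX_mapY_iff {x y : F} :
    (C • W).toAffine.Nonsingular (C.mapX x) (C.mapY x y) ↔ W.toAffine.Nonsingular x y := by
  have hX : (C • W).a₁ * C.mapY x y - (3 * C.mapX x ^ 2 + 2 * (C • W).a₂ * C.mapX x + (C • W).a₄) =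
      (C.u : F)⁻¹ ^ 4 * (W.a₁ * y - (3 * x ^ 2 + 2 * W.a₂ * x + W.a₄) +
        C.s * (2 * y + W.a₁ * x + W.a₃)) := by
    simp only [mapX, mapY, variableChange_a₁, variableChange_a₂, variableChange_a₄,
      Units.val_inv_eq_inv_val]
    ring
  have hY : 2 * C.mapY x y + (C • W).a₁ * C.mapX x + (C • W).a₃ =
      (C.u : F)⁻¹ ^ 3 * (2 * y + W.a₁ * x + W.a₃) := by
    simp only [mapX, mapY, variableChange_a₁, variableChange_a₃, Units.val_inv_eq_inv_val]
    ring
  rw [nonsingular_iff', nonsingular_iff', equation_mapX_mapY_iff, hX, hY]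
  refine and_congr_right fun _ ↦ ?_
  simp only [← not_and_or, mul_eq_zero, pow_eq_zero_iff', C.inv_u_ne_zero, false_and, false_or]
  constructor <;> rintro h ⟨hX, hY⟩ <;> simp_all

lemma negY_mapX_mapY (x y : F) :
    (C • W).toAffine.negY (C.mapX x) (C.mapY x y) = C.mapY x (W.toAffine.negY x y) := by
  simp only [negY, mapX, mapY, variableChange_a₁, variableChange_a₃, Units.val_inv_eq_inv_val]
  ring

lemma slope_mapX_mapY [DecidableEq F] {x₁ x₂ y₁ y₂ : F} (h₁ : W.toAffine.Equation x₁ y₁)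
    (h₂ : W.toAffine.Equation x₂ y₂) (hxy : ¬(x₁ = x₂ ∧ y₁ = W.toAffine.negY x₂ y₂)) :
    (C • W).toAffine.slope (C.mapX x₁) (C.mapX x₂) (C.mapY x₁ y₁) (C.mapY x₂ y₂) =
      (C.u : F)⁻¹ * (W.toAffine.slope x₁ x₂ y₁ y₂ - C.s) := by
  by_cases hx : x₁ = x₂
  · have hy : y₁ ≠ W.toAffine.negY x₂ y₂ := fun hy ↦ hxy ⟨hx, hy⟩
    obtain rfl := hx
    obtain rfl := Y_eq_of_Y_ne h₁ h₂ rfl hy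
    have hy' : C.mapY x₁ y₁ ≠ (C • W).toAffine.negY (C.mapX x₁) (C.mapY x₁ y₁) := by
      rw [negY_mapX_mapY]
      exact (C.mapY_injective x₁).ne hy
    have hD : y₁ - W.toAffine.negY x₁ y₁ ≠ 0 := sub_ne_zero.mpr hy
    have hD' : C.mapY x₁ y₁ - C.mapY x₁ (W.toAffine.negY x₁ y₁) =
        (C.u : F)⁻¹ ^ 3 * (y₁ - W.toAffine.negY x₁ y₁) := by
      simp only [mapY]; ring
    rw [slope_of_Y_ne rfl hy', slope_of_Y_ne rfl hy, negY_mapX_mapY, hD']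
    simp only [mapX, mapY, variableChange_a₁, variableChange_a₂, variableChange_a₄,
      Units.val_inv_eq_inv_val]
    field_simp
    simp only [negY]
    ring
  · rw [slope_of_X_ne ((C.mapX_injective).ne hx), slope_of_X_ne hx]
    have hD : x₁ - x₂ ≠ 0 := sub_ne_zero.mpr hx
    have hD' : C.mapX x₁ - C.mapX x₂ = (C.u : F)⁻¹ ^ 2 * (x₁ - x₂) := by
      simp only [mapX]; ring
    rw [hD']
    simp only [mapY]
    field_simp
    ring

lemma addX_mapX (x₁ x₂ ℓ : F) :
    (C • W).toAffine.addX (C.mapX x₁) (C.mapX x₂) ((C.u : F)⁻¹ * (ℓ - C.s)) =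
      C.mapX (W.toAffine.addX x₁ x₂ ℓ) := by
  simp only [addX, mapX, variableChange_a₁, variableChange_a₂, Units.val_inv_eq_inv_val]
  ring

lemma addY_mapX_mapY (x₁ x₂ y₁ ℓ : F) :
    (C • W).toAffine.addY (C.mapX x₁) (C.mapX x₂) (C.mapY x₁ y₁) ((C.u : F)⁻¹ * (ℓ - C.s)) =
      C.mapY (W.toAffine.addX x₁ x₂ ℓ) (W.toAffine.addY x₁ x₂ y₁ ℓ) := by
  simp only [addY, negAddY, addX, negY, mapX, mapY, variableChange_a₁, variableChange_a₂,
    variableChange_a₃, Units.val_inv_eq_inv_val]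
  ring

end WeierstrassCurve.VariableChange

namespace WeierstrassCurve.Affine.Point

variable {F : Type*} [Field F] [DecidableEq F] (W : WeierstrassCurve F) (C : VariableChange F)

noncomputable def variableChange : W.toAffine.Point →+ (C • W).toAffine.Point where
  toFun
    | 0 => 0
    | some _ _ h => some _ _ (C.nonsingular_mapX_mapY_iff.mpr h)
  map_zero' := rfl
  map_add' := by
    rintro (_ | ⟨x₁, y₁, h₁⟩) (_ | ⟨x₂, y₂, h₂⟩)
    any_goals rfl
    by_cases hxy : x₁ = x₂ ∧ y₁ = W.toAffine.negY x₂ y₂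
    · rw [add_of_Y_eq hxy.1 hxy.2, add_of_Y_eq (congrArg _ hxy.1) <| by
        rw [hxy.1, hxy.2, C.negY_mapX_mapY]]
    · have hxy' : ¬(C.mapX x₁ = C.mapX x₂ ∧
          C.mapY x₁ y₁ = (C • W).toAffine.negY (C.mapX x₂) (C.mapY x₂ y₂)) := by
        rintro ⟨hx, hy⟩
        obtain rfl := C.mapX_injective hx
        rw [C.negY_mapX_mapY] at hy
        exact hxy ⟨rfl, C.mapY_injective x₁ hy⟩
      simp only [add_some hxy, add_some hxy', C.slope_mapX_mapY h₁.1 h₂.1 hxy, C.addX_mapX,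
        C.addY_mapX_mapY]

lemma variableChange_bijective : Function.Bijective (variableChange W C) := by
  refine ⟨?_, ?_⟩
  · rintro (_ | ⟨x₁, y₁, h₁⟩) (_ | ⟨x₂, y₂, h₂⟩) h
    any_goals contradiction
    · rfl
    · obtain ⟨hx, hy⟩ := some.inj h
      obtain rfl := C.mapX_injective hx
      obtain rfl := C.mapY_injective x₁ hy
      rfl
  · rintro (_ | ⟨x', y', h'⟩)
    · exact ⟨0, rfl⟩
    · obtain ⟨x, y, rfl, rfl⟩ := C.exists_mapX_mapY_eq x' y'
      exact ⟨some _ _ (C.nonsingular_mapX_mapY_iff.mp h'), rfl⟩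

noncomputable def variableChangeEquiv : W.toAffine.Point ≃+ (C • W).toAffine.Point :=
  AddEquiv.ofBijective (variableChange W C) (variableChange_bijective W C)

end WeierstrassCurve.Affine.Point

lemma WeierstrassCurve.card_point_variableChange {F : Type*} [Field F] (W : WeierstrassCurve F)
    (C : VariableChange F) : Nat.card (C • W).toAffine.Point = Nat.card W.toAffine.Point := by
  classical
  exact Nat.card_congr (Affine.Point.variableChangeEquiv W C).toEquiv.symm

namespace WeierstrassCurve

variable {R : Type*} [CommRing R]

def shortJZero (B : R) : WeierstrassCurve R := ⟨0, 0, 0, 0, B⟩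

lemma shortJZero_Δ (B : R) : (shortJZero B).Δ = -432 * B ^ 2 := by
  simp only [shortJZero, Δ, b₂, b₄, b₆, b₈]
  ring

lemma ne_zero_of_isElliptic_shortJZero [Nontrivial R] {B : R} [(shortJZero B).IsElliptic] :
    B ≠ 0 := by
  rintro rfl
  simpa [shortJZero_Δ] using (shortJZero (0 : R)).isUnit_Δ

lemma variableChange_shortJZero (v : Rˣ) (B : R) :
    (⟨v⁻¹, 0, 0, 0⟩ : VariableChange R) • shortJZero B = shortJZero (v ^ 6 * B) := by
  ext <;> simp [shortJZero, variableChange_a₁, variableChange_a₂, variableChange_a₃,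
    variableChange_a₄, variableChange_a₆]

lemma exists_variableChange_eq_shortJZero {F : Type*} [Field F] (h2 : (2 : F) ≠ 0)
    (h3 : (3 : F) ≠ 0) (E : WeierstrassCurve F) [E.IsElliptic] (hj : E.j = 0) :
    ∃ (C : VariableChange F) (B : F), C • E = shortJZero B := by
  have : Invertible (2 : F) := invertibleOfNonzero h2
  have : Invertible (3 : F) := invertibleOfNonzero h3
  obtain ⟨C, hC⟩ := E.exists_variableChange_isShortNF
  have hc₄ : (C • E).c₄ = 0 := (j_eq_zero_iff _).mp (by rw [variableChange_j, hj])
  have ha₄ : (C • E).a₄ = 0 := by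
    rw [c₄_of_isShortNF, mul_eq_zero] at hc₄
    refine hc₄.resolve_left ?_
    rw [neg_eq_zero, show (48 : F) = 2 ^ 4 * 3 by norm_num]
    exact mul_ne_zero (pow_ne_zero 4 h2) h3
  refine ⟨C, (C • E).a₆, ?_⟩
  ext
  exacts [a₁_of_isShortNF _, a₂_of_isShortNF _, a₃_of_isShortNF _, ha₄, rfl]

lemma equation_shortJZero_iff {B x y : R} :
    (shortJZero B).toAffine.Equation x y ↔ y ^ 2 = x ^ 3 + B := by
  simp [Affine.equation_iff, shortJZero]

lemma cast_card_point_shortJZero {F : Type*} [Field F] [Fintype F] {m : ℕ}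
    (hq : Fintype.card F = 6 * m + 1) (B : F) [(shortJZero B).IsElliptic] :
    (Nat.card (shortJZero B).toAffine.Point : F) = 1 - (3 * m).choose (2 * m) * B ^ m := by
  have hF : ringChar F ≠ 2 := by
    rw [Ne, FiniteField.even_card_iff_char_two, hq]
    omega
  have hsols : {xy : F × F // (shortJZero B).toAffine.Equation xy.1 xy.2} ≃
      Σ x : F, {y : F // y ^ 2 = x ^ 3 + B} :=
    (Equiv.subtypeEquivRight fun _ ↦ equation_shortJZero_iff).trans
      (Equiv.subtypeProdEquivSigmaSubtype fun x y ↦ y ^ 2 = x ^ 3 + B)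
  rw [Nat.card_congr ((shortJZero B).toAffine.pointEquiv.trans (Equiv.optionCongr hsols)),
    Finite.card_option, Nat.card_sigma]
  push_cast
  simp only [FiniteField.cast_card_sqrts hF, sum_add_distrib,
    show Fintype.card F / 2 = 3 * m by omega, FiniteField.sum_cube_add_pow hq, sum_const, card_univ,
    nsmul_eq_mul, Nat.cast_card_eq_zero, mul_one, zero_add]
  ring

lemma exists_variableChange_of_card_point_shortJZero_eq {F : Type*} [Field F] [Fintype F] {m : ℕ}
    (hq : Fintype.card F = 6 * m + 1) (hchoose : ((3 * m).choose (2 * m) : F) ≠ 0) {B₁ B₂ : F}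
    [(shortJZero B₁).IsElliptic] [(shortJZero B₂).IsElliptic]
    (hcard : Nat.card (shortJZero B₁).toAffine.Point = Nat.card (shortJZero B₂).toAffine.Point) :
    ∃ C : VariableChange F, C • shortJZero B₁ = shortJZero B₂ := by
  have hB₁ := ne_zero_of_isElliptic_shortJZero (B := B₁)
  have hB₂ := ne_zero_of_isElliptic_shortJZero (B := B₂)
  have hpow : B₁ ^ m = B₂ ^ m := by
    have := congrArg (Nat.cast : ℕ → F) hcard
    rw [cast_card_point_shortJZero hq, cast_card_point_shortJZero hq, sub_right_inj] at this
    exact mul_left_cancel₀ hchoose this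
  obtain ⟨v, hv⟩ := IsCyclic.exists_pow_eq_of_pow_eq_one (d := 6) (m := m)
    (by rw [Nat.card_units, Nat.card_eq_fintype_card, hq, Nat.add_sub_cancel])
    (a := Units.mk0 (B₂ / B₁) (div_ne_zero hB₂ hB₁))
    (by ext; simp [div_pow, hpow, hB₂])
  refine ⟨⟨v⁻¹, 0, 0, 0⟩, ?_⟩
  rw [variableChange_shortJZero, ← Units.val_pow_eq_pow_val, hv, Units.val_mk0,
    div_mul_cancel₀ _ hB₁]

theorem exists_variableChange_of_card_point_eq {F : Type*} [Field F] [Fintype F] {p r : ℕ}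
    (hp : p.Prime) (hp6 : p % 6 = 1) (hF : Fintype.card F = p ^ r) {E₁ E₂ : WeierstrassCurve F}
    [E₁.IsElliptic] [E₂.IsElliptic] (hj₁ : E₁.j = 0) (hj₂ : E₂.j = 0)
    (hcard : Nat.card E₁.toAffine.Point = Nat.card E₂.toAffine.Point) :
    ∃ C : VariableChange F, C • E₁ = E₂ := by
  have := FiniteField.charP_of_card_eq_pow hp hF
  have hsmall : ∀ n : ℕ, 0 < n → n < 6 → (n : F) ≠ 0 := fun n hn hn6 h ↦ by
    have := Nat.le_of_dvd hn ((CharP.cast_eq_zero_iff F p n).mp h)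
    have := hp.two_le
    omega
  have h2 : (2 : F) ≠ 0 := hsmall 2 (by norm_num) (by norm_num)
  have h3 : (3 : F) ≠ 0 := hsmall 3 (by norm_num) (by norm_num)
  obtain ⟨m, hm⟩ : ∃ m, 6 * m + 1 = p ^ r := ⟨p ^ r / 6, by
    have : p ^ r % 6 = 1 := by simp [Nat.pow_mod, hp6]
    omega⟩
  have hchoose : ((3 * m).choose (2 * m) : F) ≠ 0 := by
    rw [Ne, CharP.cast_eq_zero_iff F p]
    exact hp.not_dvd_choose_three_mul_two_mul hp6 hm
  obtain ⟨C₁, B₁, h₁⟩ := exists_variableChange_eq_shortJZero h2 h3 E₁ hj₁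
  obtain ⟨C₂, B₂, h₂⟩ := exists_variableChange_eq_shortJZero h2 h3 E₂ hj₂
  have : (shortJZero B₁).IsElliptic := h₁ ▸ inferInstance
  have : (shortJZero B₂).IsElliptic := h₂ ▸ inferInstance
  have hcard' :
      Nat.card (shortJZero B₁).toAffine.Point = Nat.card (shortJZero B₂).toAffine.Point := by
    rw [← h₁, ← h₂, card_point_variableChange, card_point_variableChange, hcard]
  obtain ⟨C, hC⟩ := exists_variableChange_of_card_point_shortJZero_eq (hF ▸ hm.symm) hchoose hcard'
  exact ⟨C₂⁻¹ * C * C₁, by rw [mul_smul, mul_smul, h₁, hC, ← h₂, inv_smul_smul]⟩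

end WeierstrassCurve

theorem stmt_9_general (p r : ℕ) (hp : p.Prime) (hp1mod3 : p % 3 = 1)
    (F : Type) [Field F] [Fintype F] (hF : Fintype.card F = p ^ r)
    (E₁ E₂ : WeierstrassCurve F) [E₁.IsElliptic] [E₂.IsElliptic]
    (hj₁ : E₁.j = 0) (hj₂ : E₂.j = 0) :
    Nat.card E₁.toAffine.Point = Nat.card E₂.toAffine.Point ↔
      letI := Classical.decEq F; Nonempty (E₁.toAffine.Point ≃+ E₂.toAffine.Point) := by
  classical
  refine ⟨fun hcard ↦ ?_, fun ⟨e⟩ ↦ Nat.card_congr e.toEquiv⟩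
  have hp6 : p % 6 = 1 := by
    rcases hp.eq_two_or_odd with rfl | _ <;> omega
  obtain ⟨C, rfl⟩ := exists_variableChange_of_card_point_eq hp hp6 hF hj₁ hj₂ hcard
  exact ⟨Affine.Point.variableChangeEquiv E₁ C⟩

/-- For `p ≡ 1 (mod 3)`, two elliptic curves over `𝔽_q` with `j`-invariant `0` have the same
number of rational points iff their groups of rational points are isomorphic. -/
theorem stmt_9 (p r : ℕ) (hp : p.Prime) (hp3 : 3 < p) (hp1mod3 : p % 3 = 1) (hr : 0 < r)
    (F : Type) [Field F] [Fintype F] (hF : Fintype.card F = p ^ r)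
    (E₁ E₂ : WeierstrassCurve F) [E₁.IsElliptic] [E₂.IsElliptic]
    (hj₁ : E₁.j = 0) (hj₂ : E₂.j = 0) :
    Nat.card E₁.toAffine.Point = Nat.card E₂.toAffine.Point ↔
      letI := Classical.decEq F; Nonempty (E₁.toAffine.Point ≃+ E₂.toAffine.Point) :=
  stmt_9_general p r hp hp1mod3 F hF E₁ E₂ hj₁ hj₂
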